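/- Let X = {X(t)}_{t∈ℝ^d} be a jointly measurable random field with values in ℝ^m satisfying the scaling relation {X(Ut)} =_fd {V X(t)} for contracting invertible matrices U, V. Then its occupation measure τ_X, restricted to product Borel sets, satisfies the distributional self-affinity τ_X(A × B) =_d (det U) · τ_X(U⁻¹(A) × V⁻¹(B)) for all Borel sets A ⊆ ℝ^d and B ⊆ ℝ^m. -/

import Mathlib

/-!
Write `τ_X(A × B)(ω) = λ{t ∈ A : X(t, ω) ∈ B}`. Substituting `t = Us` gives
`τ_X(A × B) = |det U| · τ_{X ∘ U}(U⁻¹A × B)`, and `τ_{V X}(U⁻¹A × B)` is exactly the right-hand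
side, so it suffices that the law of an occupation time depends only on the finite-dimensional
distributions of the field. For `λ(A) < ∞` this follows from Fubini, which writes the `n`-th
moment of `τ_X(A × B)` as `∫_{Aⁿ} P(X(t₁) ∈ B, …, X(tₙ) ∈ B) dt`, together with the fact that a
bounded random variable is determined in law by its moments; a general `A` is exhausted by sets
of finite measure, along which the occupation times increase.
-/

open MeasureTheory ProbabilityTheory Set Filter
open scoped ENNReal Topology

-- The moments are the Taylor coefficients at `0` of the moment generating function, which is
-- entire; the latter determines the law.
theorem MeasureTheory.Measure.ext_of_integral_pow_eq {μ ν : Measure ℝ}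
    [IsProbabilityMeasure μ] [IsProbabilityMeasure ν]
    (hμ : integrableExpSet id μ = univ) (hν : integrableExpSet id ν = univ)
    (h : ∀ n : ℕ, ∫ x, x ^ n ∂μ = ∫ x, x ^ n ∂ν) : μ = ν := by
  have hμ0 : (0 : ℝ) ∈ interior (integrableExpSet id μ) := by simp [hμ]
  have hν0 : (0 : ℝ) ∈ interior (integrableExpSet id ν) := by simp [hν]
  have hloc : mgf id μ =ᶠ[𝓝 0] mgf id ν := by
    have hdiff := (hasFPowerSeriesAt_mgf hμ0).sub (hasFPowerSeriesAt_mgf hν0)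
    simp only [id, zero_mul, Real.exp_zero, mul_one, h, sub_self] at hdiff
    filter_upwards [hdiff.eventually_eq_zero] with t ht using sub_eq_zero.1 ht
  have hmgf : mgf id μ = mgf id ν := by
    refine AnalyticOnNhd.eq_of_eventuallyEq (𝕜 := ℝ) ?_ ?_ hloc
    · simpa [hμ] using analyticOnNhd_mgf (X := id) (μ := μ)
    · simpa [hν] using analyticOnNhd_mgf (X := id) (μ := ν)
  exact Measure.ext_of_complexMGF_id_eq <| funext fun z =>
    eqOn_complexMGF_of_mgf hmgf (by simp [hμ])

section

variable {Ω : Type*} [MeasurableSpace Ω] {P : Measure Ω} {f g : Ω → ℝ≥0∞} {C : ℝ≥0∞}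

lemma integrableExpSet_map_toReal_eq_univ [IsFiniteMeasure P] (hf : Measurable f) (hC : C ≠ ∞)
    (hfC : ∀ ω, f ω ≤ C) :
    integrableExpSet id (P.map fun ω => (f ω).toReal) = univ := by
  refine eq_univ_of_forall fun t => integrable_exp_mul_of_mem_Icc (a := 0) (b := C.toReal)
    aemeasurable_id ?_
  exact (ae_map_iff hf.ennreal_toReal.aemeasurable measurableSet_Icc).2 <|
    ae_of_all _ fun ω => ⟨ENNReal.toReal_nonneg, ENNReal.toReal_mono hC (hfC ω)⟩

lemma integral_pow_map_toReal (hf : Measurable f) (hC : C ≠ ∞) (hfC : ∀ ω, f ω ≤ C) (n : ℕ) :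
    ∫ x, x ^ n ∂(P.map fun ω => (f ω).toReal) = (∫⁻ ω, f ω ^ n ∂P).toReal := by
  rw [integral_map hf.ennreal_toReal.aemeasurable (continuous_pow n).aestronglyMeasurable,
    ← integral_toReal (hf.pow_const n).aemeasurable
      (ae_of_all _ fun ω => ENNReal.pow_lt_top ((hfC ω).trans_lt hC.lt_top))]
  simp_rw [ENNReal.toReal_pow]

lemma map_eq_map_ofReal_toReal (hf : Measurable f) (hC : C ≠ ∞) (hfC : ∀ ω, f ω ≤ C) :
    P.map f = (P.map fun ω => (f ω).toReal).map ENNReal.ofReal := by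
  rw [Measure.map_map ENNReal.measurable_ofReal hf.ennreal_toReal]
  congr with ω
  exact (ENNReal.ofReal_toReal (ne_top_of_le_ne_top hC (hfC ω))).symm

theorem map_eq_of_lintegral_pow_eq [IsProbabilityMeasure P] (hf : Measurable f)
    (hg : Measurable g) (hC : C ≠ ∞) (hfC : ∀ ω, f ω ≤ C) (hgC : ∀ ω, g ω ≤ C)
    (h : ∀ n : ℕ, ∫⁻ ω, f ω ^ n ∂P = ∫⁻ ω, g ω ^ n ∂P) : P.map f = P.map g := by
  have : IsProbabilityMeasure (P.map fun ω => (f ω).toReal) :=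
    Measure.isProbabilityMeasure_map hf.ennreal_toReal.aemeasurable
  have : IsProbabilityMeasure (P.map fun ω => (g ω).toReal) :=
    Measure.isProbabilityMeasure_map hg.ennreal_toReal.aemeasurable
  rw [map_eq_map_ofReal_toReal hf hC hfC, map_eq_map_ofReal_toReal hg hC hgC,
    Measure.ext_of_integral_pow_eq (integrableExpSet_map_toReal_eq_univ hf hC hfC)
      (integrableExpSet_map_toReal_eq_univ hg hC hgC) fun n => by
        rw [integral_pow_map_toReal hf hC hfC, integral_pow_map_toReal hg hC hgC, h]]

end

section

variable {Ω : Type*} [MeasurableSpace Ω] {P : Measure Ω} {f g : ℕ → Ω → ℝ≥0∞}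

lemma map_iSup_apply_Iic [IsFiniteMeasure P] (hf : ∀ k, Measurable (f k))
    (hf_mono : Monotone f) (x : ℝ≥0∞) :
    P.map (fun ω => ⨆ k, f k ω) (Iic x) = ⨅ k, P.map (f k) (Iic x) := by
  have hpre : (fun ω => ⨆ k, f k ω) ⁻¹' Iic x = ⋂ k, f k ⁻¹' Iic x := by
    ext ω; simp
  have hanti : Antitone fun k => f k ⁻¹' Iic x := fun k l hkl ω hω => (hf_mono hkl ω).trans hω
  rw [Measure.map_apply (Measurable.iSup hf) measurableSet_Iic, hpre,
    hanti.measure_iInter (fun k => (hf k measurableSet_Iic).nullMeasurableSet)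
      ⟨0, measure_ne_top _ _⟩]
  simp_rw [Measure.map_apply (hf _) measurableSet_Iic]

lemma map_iSup_eq_of_monotone [IsFiniteMeasure P] (hf : ∀ k, Measurable (f k))
    (hg : ∀ k, Measurable (g k)) (hf_mono : Monotone f) (hg_mono : Monotone g)
    (h : ∀ k, P.map (f k) = P.map (g k)) :
    P.map (fun ω => ⨆ k, f k ω) = P.map (fun ω => ⨆ k, g k ω) :=
  Measure.ext_of_Iic _ _ fun x => by
    rw [map_iSup_apply_Iic hf hf_mono, map_iSup_apply_Iic hg hg_mono]
    simp_rw [h]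

end

section

variable {α β Ω : Type*} [MeasurableSpace α]

def occupationTime (μ : Measure α) (X : α → Ω → β) (A : Set α) (B : Set β) (ω : Ω) : ℝ≥0∞ :=
  μ {t | t ∈ A ∧ X t ω ∈ B}

variable {μ : Measure α} {X Y : α → Ω → β} {A : Set α} {B : Set β}

lemma occupationTime_le (ω : Ω) : occupationTime μ X A B ω ≤ μ A :=
  measure_mono fun _ ht => ht.1

lemma occupationTime_mono {A' : Set α} (hAA' : A ⊆ A') (ω : Ω) :
    occupationTime μ X A B ω ≤ occupationTime μ X A' B ω :=
  measure_mono fun _ ht => ⟨hAA' ht.1, ht.2⟩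

lemma occupationTime_eq_iSup_inter_spanningSets [SigmaFinite μ] (ω : Ω) :
    occupationTime μ X A B ω = ⨆ k, occupationTime μ X (A ∩ spanningSets μ k) B ω := by
  have hmono : Monotone fun k => {t | t ∈ A ∩ spanningSets μ k ∧ X t ω ∈ B} :=
    fun k l hkl t ht => ⟨⟨ht.1.1, monotone_spanningSets μ hkl ht.1.2⟩, ht.2⟩
  simp only [occupationTime]
  rw [← hmono.measure_iUnion]
  congr 1
  ext t
  simp only [mem_iUnion, mem_ofPred_eq, mem_inter_iff]
  have ⟨k, hk⟩ := mem_iUnion.1 (iUnion_spanningSets μ ▸ mem_univ t)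
  exact ⟨fun h => ⟨k, ⟨h.1, hk⟩, h.2⟩, fun ⟨_, h⟩ => ⟨h.1.1, h.2⟩⟩

variable [MeasurableSpace β] [MeasurableSpace Ω] {P : Measure Ω}

lemma measurableSet_occupation (hX : Measurable fun q : α × Ω => X q.1 q.2)
    (hA : MeasurableSet A) (hB : MeasurableSet B) :
    MeasurableSet {q : α × Ω | q.1 ∈ A ∧ X q.1 q.2 ∈ B} :=
  (hA.preimage measurable_fst).inter (hB.preimage hX)

lemma measurable_occupationTime [SFinite μ] (hX : Measurable fun q : α × Ω => X q.1 q.2)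
    (hA : MeasurableSet A) (hB : MeasurableSet B) : Measurable (occupationTime μ X A B) :=
  measurable_measure_prodMk_right (measurableSet_occupation hX hA hB)

lemma lintegral_occupationTime_pow [SigmaFinite μ] [SFinite P]
    (hX : Measurable fun q : α × Ω => X q.1 q.2) (hA : MeasurableSet A) (hB : MeasurableSet B)
    (n : ℕ) :
    ∫⁻ ω, occupationTime μ X A B ω ^ n ∂P =
      ∫⁻ t in univ.pi fun _ : Fin n => A,
        P.map (fun ω i => X (t i) ω) (univ.pi fun _ => B) ∂Measure.pi fun _ => μ := by
  set E : Set ((Fin n → α) × Ω) := {q | ∀ i, q.1 i ∈ A ∧ X (q.1 i) q.2 ∈ B}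
  have hE : MeasurableSet E := by
    simp only [E, ofPred_forall]
    exact .iInter fun i => (measurableSet_occupation hX hA hB).preimage
      (f := fun q : (Fin n → α) × Ω => (q.1 i, q.2)) (by fun_prop)
  have hpow : ∀ ω, occupationTime μ X A B ω ^ n = Measure.pi (fun _ => μ) ((·, ω) ⁻¹' E) := by
    intro ω
    have : (·, ω) ⁻¹' E = univ.pi fun _ : Fin n => {t | t ∈ A ∧ X t ω ∈ B} := by
      ext t; simp [E]
    simp [this, Measure.pi_pi, occupationTime]
  have hslice : ∀ t, P (Prod.mk t ⁻¹' E) = (univ.pi fun _ : Fin n => A).indicator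
      (fun t => P.map (fun ω i => X (t i) ω) (univ.pi fun _ => B)) t := by
    intro t
    by_cases ht : t ∈ univ.pi fun _ => A
    · have hmeas : Measurable fun ω i => X (t i) ω :=
        measurable_pi_lambda _ fun i => hX.comp measurable_prodMk_left
      rw [indicator_of_mem ht, Measure.map_apply hmeas (.univ_pi fun _ => hB)]
      congr with ω
      simp_all [E]
    · rw [indicator_of_notMem ht]
      obtain ⟨i, hi⟩ : ∃ i, t i ∉ A := by simpa using ht
      rw [eq_empty_of_forall_notMem (s := Prod.mk t ⁻¹' E) fun ω hω => hi (hω i).1,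
        measure_empty]
  simp_rw [hpow, ← Measure.prod_apply_symm hE, Measure.prod_apply hE, hslice]
  exact lintegral_indicator (.univ_pi fun _ => hA) _

lemma map_occupationTime_eq_of_measure_ne_top [SigmaFinite μ] [IsProbabilityMeasure P]
    (hX : Measurable fun q : α × Ω => X q.1 q.2) (hY : Measurable fun q : α × Ω => Y q.1 q.2)
    (hfdd : ∀ (n : ℕ) (t : Fin n → α),
      P.map (fun ω i => X (t i) ω) = P.map (fun ω i => Y (t i) ω))
    (hA : MeasurableSet A) (hB : MeasurableSet B) (hμA : μ A ≠ ∞) :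
    P.map (occupationTime μ X A B) = P.map (occupationTime μ Y A B) :=
  map_eq_of_lintegral_pow_eq (measurable_occupationTime hX hA hB)
    (measurable_occupationTime hY hA hB) hμA occupationTime_le occupationTime_le fun n => by
      simp_rw [lintegral_occupationTime_pow hX hA hB, lintegral_occupationTime_pow hY hA hB, hfdd]

theorem map_occupationTime_eq [SigmaFinite μ] [IsProbabilityMeasure P]
    (hX : Measurable fun q : α × Ω => X q.1 q.2) (hY : Measurable fun q : α × Ω => Y q.1 q.2)
    (hfdd : ∀ (n : ℕ) (t : Fin n → α),
      P.map (fun ω i => X (t i) ω) = P.map (fun ω i => Y (t i) ω))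
    (hA : MeasurableSet A) (hB : MeasurableSet B) :
    P.map (occupationTime μ X A B) = P.map (occupationTime μ Y A B) := by
  have hA' (k : ℕ) : MeasurableSet (A ∩ spanningSets μ k) :=
    hA.inter (measurableSet_spanningSets μ k)
  have hmono (Z : α → Ω → β) : Monotone fun k => occupationTime μ Z (A ∩ spanningSets μ k) B :=
    fun _ _ hkl => occupationTime_mono (inter_subset_inter_right A (monotone_spanningSets μ hkl))
  have hsup (Z : α → Ω → β) : occupationTime μ Z A B =
      fun ω => ⨆ k, occupationTime μ Z (A ∩ spanningSets μ k) B ω :=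
    funext occupationTime_eq_iSup_inter_spanningSets
  rw [hsup X, hsup Y]
  exact map_iSup_eq_of_monotone (fun k => measurable_occupationTime hX (hA' k) hB)
    (fun k => measurable_occupationTime hY (hA' k) hB) (hmono X) (hmono Y) fun k =>
      map_occupationTime_eq_of_measure_ne_top hX hY hfdd (hA' k) hB
        ((measure_mono inter_subset_right).trans_lt (measure_spanningSets_lt_top μ k)).ne

end

theorem MeasureTheory.Measure.addHaar_eq_ofReal_abs_det_mul_preimage_linearMap {E : Type*}
    [NormedAddCommGroup E] [NormedSpace ℝ E] [MeasurableSpace E] [BorelSpace E]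
    [FiniteDimensional ℝ E] (μ : Measure E) [μ.IsAddHaarMeasure] {f : E →ₗ[ℝ] E}
    (hf : LinearMap.det f ≠ 0) (s : Set E) :
    μ s = ENNReal.ofReal |LinearMap.det f| * μ (f ⁻¹' s) := by
  rw [addHaar_preimage_linearMap μ hf, ← mul_assoc, ← ENNReal.ofReal_mul (abs_nonneg _), abs_inv,
    mul_inv_cancel₀ (abs_ne_zero.2 hf), ENNReal.ofReal_one, one_mul]

theorem occupation_measure_self_affine_general (d m : ℕ) {Ω : Type*} [MeasurableSpace Ω]
    (P : Measure Ω) [IsProbabilityMeasure P]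
    (X : EuclideanSpace ℝ (Fin d) → Ω → EuclideanSpace ℝ (Fin m))
    (hX : Measurable fun q : EuclideanSpace ℝ (Fin d) × Ω => X q.1 q.2)
    (U : Matrix (Fin d) (Fin d) ℝ) (V : Matrix (Fin m) (Fin m) ℝ)
    (hU : IsUnit U.det)
    (hscal : ∀ (n : ℕ) (t : Fin n → EuclideanSpace ℝ (Fin d)),
      Measure.map (fun ω => fun i => X (Matrix.toEuclideanLin U (t i)) ω) P =
        Measure.map (fun ω => fun i => Matrix.toEuclideanLin V (X (t i) ω)) P) :
    ∀ (A : Set (EuclideanSpace ℝ (Fin d))) (B : Set (EuclideanSpace ℝ (Fin m))),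
      MeasurableSet A → MeasurableSet B →
      Measure.map (fun ω => volume {t | t ∈ A ∧ X t ω ∈ B}) P =
        Measure.map (fun ω => ENNReal.ofReal |U.det| *
          volume {t | Matrix.toEuclideanLin U t ∈ A ∧ Matrix.toEuclideanLin V (X t ω) ∈ B}) P := by
  intro A B hA hB
  set fU := Matrix.toEuclideanLin U
  set fV := Matrix.toEuclideanLin V
  have hdet : LinearMap.det fU = U.det := LinearMap.det_toLpLin 2 U
  have hfU : Measurable fU := fU.continuous_of_finiteDimensional.measurable
  have hfV : Measurable fV := fV.continuous_of_finiteDimensional.measurable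
  have hXU : Measurable fun q : EuclideanSpace ℝ (Fin d) × Ω => X (fU q.1) q.2 :=
    hX.comp (hfU.prodMap measurable_id)
  have hVX : Measurable fun q : EuclideanSpace ℝ (Fin d) × Ω => fV (X q.1 q.2) := hfV.comp hX
  have hA' : MeasurableSet (fU ⁻¹' A) := hA.preimage hfU
  have hscale : Measurable (ENNReal.ofReal |U.det| * ·) := measurable_const_mul _
  calc P.map (fun ω => volume {t | t ∈ A ∧ X t ω ∈ B})
      = P.map ((ENNReal.ofReal |U.det| * ·) ∘
          occupationTime volume (fun t ω => X (fU t) ω) (fU ⁻¹' A) B) := by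
        congr with ω
        rw [← hdet]
        exact Measure.addHaar_eq_ofReal_abs_det_mul_preimage_linearMap volume
          (hdet ▸ hU.ne_zero) _
    _ = (P.map (occupationTime volume (fun t ω => X (fU t) ω) (fU ⁻¹' A) B)).map
          (ENNReal.ofReal |U.det| * ·) :=
        (Measure.map_map hscale (measurable_occupationTime hXU hA' hB)).symm
    _ = (P.map (occupationTime volume (fun t ω => fV (X t ω)) (fU ⁻¹' A) B)).map
          (ENNReal.ofReal |U.det| * ·) := by
        rw [map_occupationTime_eq (Y := fun t ω => fV (X t ω)) hXU hVX hscal hA' hB]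
    _ = _ := Measure.map_map hscale (measurable_occupationTime hVX hA' hB)

/-- If a jointly measurable random field satisfies the scaling relation
`{X(Ut)} =_fd {V X(t)}` for contracting invertible matrices `U, V` (all eigenvalues of
modulus in `(0,1)`), then its occupation measure satisfies the distributional self-affinity
`τ_X(A × B) =_d |det U| · τ_X(U⁻¹(A) × V⁻¹(B))` for all Borel sets `A`, `B`. -/
theorem occupation_measure_self_affine (d m : ℕ) {Ω : Type*} [MeasurableSpace Ω]
    (P : Measure Ω) [IsProbabilityMeasure P]
    (X : EuclideanSpace ℝ (Fin d) → Ω → EuclideanSpace ℝ (Fin m))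
    (hX : Measurable fun q : EuclideanSpace ℝ (Fin d) × Ω => X q.1 q.2)
    (U : Matrix (Fin d) (Fin d) ℝ) (V : Matrix (Fin m) (Fin m) ℝ)
    (hU : IsUnit U.det) (hV : IsUnit V.det)
    (hUcontr : ∀ z ∈ (U.map (algebraMap ℝ ℂ)).charpoly.roots,
      0 < ‖z‖ ∧ ‖z‖ < 1)
    (hVcontr : ∀ z ∈ (V.map (algebraMap ℝ ℂ)).charpoly.roots,
      0 < ‖z‖ ∧ ‖z‖ < 1)
    (hscal : ∀ (n : ℕ) (t : Fin n → EuclideanSpace ℝ (Fin d)),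
      Measure.map (fun ω => fun i => X (Matrix.toEuclideanLin U (t i)) ω) P =
        Measure.map (fun ω => fun i => Matrix.toEuclideanLin V (X (t i) ω)) P) :
    ∀ (A : Set (EuclideanSpace ℝ (Fin d))) (B : Set (EuclideanSpace ℝ (Fin m))),
      MeasurableSet A → MeasurableSet B →
      Measure.map (fun ω => volume {t | t ∈ A ∧ X t ω ∈ B}) P =
        Measure.map (fun ω => ENNReal.ofReal |U.det| *
          volume {t | Matrix.toEuclideanLin U t ∈ A ∧ Matrix.toEuclideanLin V (X t ω) ∈ B}) P :=
  occupation_measure_self_affine_general d m P X hX U V hU hscal
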